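/- Let G be the abelian group generated by elements t_1, ..., t_n subject to the relations t_1 + t_2 + t_1 = 0, t_i + (t_{i-1} + t_{i+1}) + t_i = 0 for 2 ≤ i ≤ n-1, and t_n + t_{n-1} + t_n = 0 (corresponding to d even). Then G is cyclic of order n+1, generated by t_1. -/

import Mathlib

open FreeAbelianGroup

/-- The generator `t_k` (for `1 ≤ k ≤ n`) of the free abelian group on `Fin n`. -/
noncomputable def gen (n : ℕ) (k : ℕ) : FreeAbelianGroup (Fin n) :=
  if h : 1 ≤ k ∧ k ≤ n then FreeAbelianGroup.of ⟨k - 1, by omega⟩ else 0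

/-- The relations `2t₁ + t₂`, `2tᵢ + t_{i-1} + t_{i+1}` for `2 ≤ i ≤ n-1`,
and `2tₙ + t_{n-1}` (corresponding to `d` even). -/
noncomputable def relSetEven (n : ℕ) : Set (FreeAbelianGroup (Fin n)) :=
  {x | x = 2 • gen n 1 + gen n 2} ∪
  {x | ∃ i : ℕ, 2 ≤ i ∧ i ≤ n - 1 ∧ x = 2 • gen n i + gen n (i - 1) + gen n (i + 1)} ∪
  {x | x = 2 • gen n n + gen n (n - 1)}

/-- The presented abelian group `⟨t₁,…,tₙ ∣ 2t₁+t₂, 2tᵢ+t_{i-1}+t_{i+1} (2 ≤ i ≤ n-1),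
2tₙ+t_{n-1}⟩`. -/
noncomputable def GEven (n : ℕ) : Type :=
  FreeAbelianGroup (Fin n) ⧸ AddSubgroup.closure (relSetEven n)

noncomputable instance (n : ℕ) : AddCommGroup (GEven n) :=
  QuotientAddGroup.Quotient.addCommGroup _

/-- The image of `t_k` in the presented group. -/
noncomputable def Tgen (n : ℕ) (k : ℕ) : GEven n :=
  QuotientAddGroup.mk (gen n k)

lemma gen_eq (n k : ℕ) (h1 : 1 ≤ k) (h2 : k ≤ n) :
    gen n k = FreeAbelianGroup.of ⟨k - 1, by omega⟩ := by
  simp [gen, h1, h2]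

lemma mk_rel (n : ℕ) {r : FreeAbelianGroup (Fin n)} (hr : r ∈ relSetEven n) :
    (QuotientAddGroup.mk r : GEven n) = 0 :=
  (QuotientAddGroup.eq_zero_iff r).2 (AddSubgroup.subset_closure hr)

lemma two_smul_cast {A : Type*} [AddCommGroup A] (x : A) : (2:ℕ) • x = (2:ℤ) • x := by
  rw [two_nsmul, two_zsmul]

lemma relA (n : ℕ) : (2 : ℤ) • Tgen n 1 + Tgen n 2 = 0 := by
  have := mk_rel n (Or.inl (Or.inl rfl))
  rw [two_smul_cast] at this
  simp [Tgen] at this ⊢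
  exact this

lemma relB (n i : ℕ) (h2 : 2 ≤ i) (h3 : i ≤ n - 1) :
    (2 : ℤ) • Tgen n i + Tgen n (i - 1) + Tgen n (i + 1) = 0 := by
  have := mk_rel n (Or.inl (Or.inr ⟨i, h2, h3, rfl⟩))
  rw [two_smul_cast] at this
  simp [Tgen] at this ⊢
  exact this

lemma relC (n : ℕ) : (2 : ℤ) • Tgen n n + Tgen n (n - 1) = 0 := by
  have := mk_rel n (Or.inr rfl)
  rw [two_smul_cast] at this
  simp [Tgen] at this ⊢
  exact this

lemma key (n : ℕ) (hn : 2 ≤ n) : ∀ m : ℕ, m + 1 ≤ n →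
    Tgen n (m + 1) = (((-1) ^ m * (m + 1) : ℤ)) • Tgen n 1 := by
  intro m
  induction m using Nat.strong_induction_on with
  | _ m ih =>
    match m with
    | 0 => intro _; simp
    | 1 =>
      intro _
      have h := relA n
      have : Tgen n 2 = -((2:ℤ) • Tgen n 1) := by linear_combination (norm := abel) h
      rw [this]
      norm_num
    | (j + 2) =>
      intro hle
      have h := relB n (j + 2) (by omega) (by omega)
      have e1 := ih (j + 1) (by omega) (by omega)
      have e2 := ih j (by omega) (by omega)
      have hj : j + 2 - 1 = j + 1 := by omega
      rw [hj] at h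
      have hT : Tgen n (j + 3) =
          -((2:ℤ) • Tgen n (j + 2)) - Tgen n (j + 1) := by
        linear_combination (norm := abel) h
      rw [show j + 2 + 1 = j + 3 from rfl, hT, e1, e2, smul_smul, ← neg_smul,
        ← sub_smul]
      congr 1
      push_cast
      ring

lemma torsion (n : ℕ) (hn : 2 ≤ n) : ((n : ℤ) + 1) • Tgen n 1 = 0 := by
  obtain ⟨m, rfl⟩ : ∃ m, n = m + 2 := ⟨n - 2, by omega⟩
  have h := relC (m + 2)
  have e1 := key (m + 2) hn (m + 1) (by omega)
  have e2 := key (m + 2) hn m (by omega)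
  rw [show m + 2 - 1 = m + 1 from by omega] at h
  rw [show m + 1 + 1 = m + 2 from rfl] at e1
  rw [e1, e2, smul_smul, ← add_smul] at h
  have hsq : ((-1:ℤ)^(m+1)) * ((-1:ℤ)^(m+1)) = 1 := by
    rw [← pow_add]; exact Even.neg_one_pow ⟨m+1, by ring⟩
  have hodd : ((-1:ℤ)^(m+1)) * ((-1:ℤ)^m) = -1 := by
    rw [← pow_add]; exact Odd.neg_one_pow ⟨m, by ring⟩
  have h2 := congrArg (fun x => ((-1 : ℤ) ^ (m + 1)) • x) h
  simp only [smul_smul, smul_zero] at h2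
  push_cast at h2 ⊢
  have hs : ((-1:ℤ)^(m+1)) * (2 * ((-1)^(m+1) * ((m:ℤ)+1+1)) + (-1)^m * ((m:ℤ)+1))
      = (m:ℤ) + 2 + 1 := by
    linear_combination (2*((m:ℤ)+2)) * hsq + ((m:ℤ)+1) * hodd
  rw [hs] at h2
  exact h2

/-- The map to `ZMod (n+1)` sending `t_k` to `(-1)^(k+1) k`. -/
noncomputable def fmap (n : ℕ) : FreeAbelianGroup (Fin n) →+ ZMod (n + 1) :=
  FreeAbelianGroup.lift (fun i => ((-1) ^ (i : ℕ) * ((i : ℕ) + 1) : ZMod (n + 1)))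

lemma fmap_gen (n k : ℕ) (h1 : 1 ≤ k) (h2 : k ≤ n) :
    fmap n (gen n k) = ((-1) ^ (k + 1) * k : ZMod (n + 1)) := by
  obtain ⟨m, rfl⟩ : ∃ m, k = m + 1 := ⟨k - 1, by omega⟩
  rw [gen_eq n (m + 1) h1 h2]
  simp only [fmap, FreeAbelianGroup.lift_apply_of]
  push_cast
  rw [pow_succ, pow_succ]
  ring

lemma fmap_rel (n : ℕ) (hn : 2 ≤ n) : ∀ r ∈ relSetEven n, fmap n r = 0 := by
  rintro r ((h | ⟨i, hi2, hi3, rfl⟩) | h)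
  · rw [Set.mem_setOf_eq] at h
    subst h
    rw [map_add, map_nsmul, fmap_gen n 1 le_rfl (by omega),
      fmap_gen n 2 (by omega) (by omega)]
    push_cast
    norm_num
  · obtain ⟨m, rfl⟩ : ∃ m, i = m + 2 := ⟨i - 2, by omega⟩
    rw [map_add, map_add, map_nsmul, fmap_gen n (m + 2) (by omega) (by omega),
      show m + 2 - 1 = m + 1 from by omega,
      fmap_gen n (m + 1) (by omega) (by omega),
      fmap_gen n (m + 2 + 1) (by omega) (by omega)]
    push_cast
    rw [nsmul_eq_mul]
    push_cast
    ring
  · rw [Set.mem_setOf_eq] at h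
    subst h
    obtain ⟨m, hm⟩ : ∃ m, n = m + 2 := ⟨n - 2, by omega⟩
    subst hm
    rw [map_add, map_nsmul, fmap_gen (m + 2) (m + 2) (by omega) (by omega),
      show m + 2 - 1 = m + 1 from by omega,
      fmap_gen (m + 2) (m + 1) (by omega) (by omega)]
    have h0 : ((m : ZMod (m + 2 + 1)) + 2 + 1) = 0 := by
      have := ZMod.natCast_self (m + 2 + 1)
      push_cast at this
      exact this
    rw [nsmul_eq_mul]
    push_cast
    linear_combination (-((-1 : ZMod (m + 2 + 1)) ^ m)) * h0

lemma key' (n : ℕ) (hn : 2 ≤ n) (i : Fin n) :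
    (QuotientAddGroup.mk (FreeAbelianGroup.of i) : GEven n) =
      (((-1) ^ (i : ℕ) * ((i : ℕ) + 1) : ℤ)) • Tgen n 1 := by
  have h : gen n ((i : ℕ) + 1) = FreeAbelianGroup.of i := by
    rw [gen_eq n ((i : ℕ) + 1) (by omega) (by omega)]
    congr 1
  have := key n hn (i : ℕ) (by omega)
  rw [Tgen, h] at this
  exact this

/-- The abelian group generated by `t₁, …, tₙ` subject to the relations
`t₁ + t₂ + t₁ = 0`, `tᵢ + (t_{i-1} + t_{i+1}) + tᵢ = 0` for `2 ≤ i ≤ n-1`, and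
`tₙ + t_{n-1} + tₙ = 0` is cyclic of order `n+1`, generated by (the image of) `t₁`. -/
theorem stmt_1 (n : ℕ) (hn : 2 ≤ n) :
    (∃ e : GEven n ≃+ ZMod (n + 1),
        e (QuotientAddGroup.mk (gen n 1)) = 1) ∧
    AddSubgroup.closure {(QuotientAddGroup.mk (gen n 1) : GEven n)} = ⊤ := by
  classical
  set φ : GEven n →+ ZMod (n + 1) :=
    QuotientAddGroup.lift _ (fmap n)
      (fun x hx => by
        have : x ∈ (fmap n).ker :=
          (AddSubgroup.closure_le _).2
            (fun r hr => AddMonoidHom.mem_ker.mpr (fmap_rel n hn r hr)) hx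
        exact this) with hφdef
  set ψ : ZMod (n + 1) →+ GEven n :=
    ZMod.lift (n + 1) ⟨zmultiplesHom _ (Tgen n 1), by
      have := torsion n hn
      simpa using this⟩ with hψdef
  have hψ_int : ∀ c : ℤ, ψ (c : ZMod (n + 1)) = c • Tgen n 1 := fun c =>
    ZMod.lift_coe _ _ c
  have hφ_gen : ∀ k : ℕ, 1 ≤ k → k ≤ n →
      φ (Tgen n k) = ((-1) ^ (k + 1) * k : ZMod (n + 1)) := fun k h1 h2 =>
    fmap_gen n k h1 h2
  have hφ_one : φ (Tgen n 1) = 1 := by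
    rw [hφ_gen 1 le_rfl (by omega)]
    norm_num
  have hψφ : ψ.comp φ = AddMonoidHom.id (GEven n) := by
    refine QuotientAddGroup.addMonoidHom_ext _ (FreeAbelianGroup.lift_ext _ _ fun i => ?_)
    show ψ (φ (QuotientAddGroup.mk (FreeAbelianGroup.of i))) =
      QuotientAddGroup.mk (FreeAbelianGroup.of i)
    have h1 : φ (QuotientAddGroup.mk (FreeAbelianGroup.of i)) =
        ((((-1) ^ (i : ℕ) * ((i : ℕ) + 1) : ℤ)) : ZMod (n + 1)) := by
      show fmap n (FreeAbelianGroup.of i) = _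
      simp only [fmap, FreeAbelianGroup.lift_apply_of]
      push_cast
      ring
    rw [h1, hψ_int, key' n hn i]
  have hφψ : φ.comp ψ = AddMonoidHom.id (ZMod (n + 1)) := by
    ext x
    obtain ⟨c, rfl⟩ := ZMod.intCast_surjective x
    simp only [AddMonoidHom.comp_apply, AddMonoidHom.id_apply]
    rw [hψ_int, map_zsmul, hφ_one, zsmul_eq_mul, mul_one]
  refine ⟨⟨AddMonoidHom.toAddEquiv φ ψ hψφ hφψ, hφ_one⟩, ?_⟩
  rw [AddSubgroup.eq_top_iff']
  intro x
  have hx : ψ (φ x) = x := DFunLike.congr_fun hψφ x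
  obtain ⟨c, hc⟩ := ZMod.intCast_surjective (φ x)
  rw [← hx, ← hc, hψ_int]
  exact AddSubgroup.zsmul_mem _ (AddSubgroup.subset_closure (Set.mem_singleton _)) c
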